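/- For all real θ > 0, α > −1, every integer N ≥ 1 and all x, y > 0, the Christoffel–Darboux kernel of the biorthogonal Laguerre ensemble equals the sum over the Konhauser biorthogonal Laguerre polynomials: K_N^{Lag}(x,y) = Σ_{i=0}^{N−1} Z_i^α(x^θ;θ) · Y_i^α(y;θ). -/
import Mathlib


/-- The Christoffel–Darboux kernel of the `N`-point biorthogonal Laguerre ensemble. -/
noncomputable def KLag (α θ : ℝ) (N : ℕ) (x y : ℝ) : ℝ :=
  θ * ∑ k ∈ Finset.range N, ∑ i ∈ Finset.range N, ∑ r ∈ Finset.Icc i (N - 1),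
    (Real.Gamma ((N : ℝ) + ((i : ℝ) + α + 1) / θ) /
        (Real.Gamma (α + θ * (k : ℝ) + 1) * Real.Gamma (((i : ℝ) + α + 1) / θ))) *
      ((-1) ^ (i + k) /
        ((Nat.factorial k : ℝ) * (Nat.factorial (N - 1 - k) : ℝ) *
          (Nat.factorial i : ℝ) * (Nat.factorial (r - i) : ℝ))) *
      (x ^ (θ * (k : ℝ)) * y ^ r / (α + θ * (k : ℝ) + (i : ℝ) + 1))

/-- The Konhauser biorthogonal Laguerre polynomial `Z_n^α(x;θ)`. -/
noncomputable def konhauserZ (α θ : ℝ) (n : ℕ) (x : ℝ) : ℝ :=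
  ∑ j ∈ Finset.range (n + 1),
    (n.choose j : ℝ) * (-1) ^ j * x ^ j / Real.Gamma (θ * (j : ℝ) + α + 1)

/-- The Konhauser biorthogonal Laguerre polynomial `Y_n^α(x;θ)`. -/
noncomputable def konhauserY (α θ : ℝ) (n : ℕ) (x : ℝ) : ℝ :=
  (1 / (Nat.factorial n : ℝ)) * ∑ r ∈ Finset.range (n + 1),
    (x ^ r / (Nat.factorial r : ℝ)) *
      ∑ i ∈ Finset.range (r + 1),
        (-1) ^ i * (r.choose i : ℝ) *
          (ascPochhammer ℝ n).eval (((i : ℝ) + α + 1) / θ)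


section Aux

open Finset Polynomial

private lemma diff_step (r : ℕ) (f : ℕ → ℝ) :
    ∑ i ∈ Finset.range (r+2), (-1:ℝ)^i * ((r+1).choose i : ℝ) * f i
    = ∑ i ∈ Finset.range (r+1), (-1:ℝ)^i * (r.choose i : ℝ) * (f i - f (i+1)) := by
  have hS1 : ∑ i ∈ Finset.range (r+1), (-1:ℝ)^i * (r.choose i : ℝ) * f i
      = f 0 - ∑ i ∈ Finset.range (r+1), (-1:ℝ)^i * (r.choose (i+1) : ℝ) * f (i+1) := by
    rw [Finset.sum_range_succ' (fun i => (-1:ℝ)^i * (r.choose i : ℝ) * f i) r,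
      Finset.sum_range_succ (fun i => (-1:ℝ)^i * (r.choose (i+1) : ℝ) * f (i+1)) r]
    simp [pow_succ]
    ring
  have hL : ∑ i ∈ Finset.range (r+2), (-1:ℝ)^i * ((r+1).choose i : ℝ) * f i
      = f 0 - ∑ i ∈ Finset.range (r+1),
          (-1:ℝ)^i * ((r.choose i : ℝ) + (r.choose (i+1) : ℝ)) * f (i+1) := by
    rw [Finset.sum_range_succ' (fun i => (-1:ℝ)^i * ((r+1).choose i : ℝ) * f i) (r+1)]
    simp only [Nat.choose_succ_succ, Nat.cast_add, pow_succ]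
    simp
    ring
  rw [hL]
  simp only [mul_sub, add_mul, mul_add, Finset.sum_sub_distrib, Finset.sum_add_distrib, hS1]
  ring

private lemma alt_sum_poly : ∀ (r : ℕ) (p : Polynomial ℝ), p.natDegree < r →
    ∑ i ∈ Finset.range (r+1), (-1:ℝ)^i * (r.choose i : ℝ) * p.eval (i:ℝ) = 0 := by
  intro r
  induction r with
  | zero => intro p hp; omega
  | succ r ih =>
    intro p hp
    have key := diff_step r (fun i => p.eval (i:ℝ))
    rw [key]
    set q : Polynomial ℝ := p - p.comp (X + C 1) with hq
    have hqe : ∀ i : ℕ, p.eval (i:ℝ) - p.eval ((i:ℝ)+1) = q.eval (i:ℝ) := by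
      intro i; simp [hq, eval_comp]
    have : ∑ i ∈ Finset.range (r+1), (-1:ℝ)^i * (r.choose i : ℝ)
        * ((fun i : ℕ => p.eval (i:ℝ)) i - (fun i : ℕ => p.eval (i:ℝ)) (i+1))
        = ∑ i ∈ Finset.range (r+1), (-1:ℝ)^i * (r.choose i : ℝ) * q.eval (i:ℝ) := by
      refine Finset.sum_congr rfl fun i _ => ?_
      simp only [← hqe i]
      push_cast
      ring
    rw [this]
    by_cases hq0 : q = 0
    · simp [hq0]
    · refine ih q ?_
      have hp0 : p ≠ 0 := by
        intro h; apply hq0; simp [hq, h]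
      have hd1 : (X + C (1:ℝ)).natDegree = 1 := Polynomial.natDegree_X_add_C 1
      have hcomp0 : p.comp (X + C 1) ≠ 0 := by
        intro h
        have hlc : (p.comp (X + C (1:ℝ))).leadingCoeff
            = p.leadingCoeff * (X + C (1:ℝ)).leadingCoeff ^ p.natDegree :=
          Polynomial.leadingCoeff_comp (by rw [hd1]; norm_num)
        rw [h, Polynomial.leadingCoeff_zero, Polynomial.leadingCoeff_X_add_C, one_pow,
          mul_one] at hlc
        exact hp0 (Polynomial.leadingCoeff_eq_zero.mp hlc.symm)
      have hdeg : p.degree = (p.comp (X + C 1)).degree := by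
        rw [Polynomial.degree_eq_natDegree hp0, Polynomial.degree_eq_natDegree hcomp0,
          Polynomial.natDegree_comp, hd1, mul_one]
      have hlc : p.leadingCoeff = (p.comp (X + C 1)).leadingCoeff := by
        rw [Polynomial.leadingCoeff_comp (by rw [hd1]; norm_num),
          Polynomial.leadingCoeff_X_add_C, one_pow, mul_one]
      have hlt : q.degree < p.degree := Polynomial.degree_sub_lt hdeg hp0 hlc
      have : q.natDegree < p.natDegree := Polynomial.natDegree_lt_natDegree hq0 hlt
      omega

private lemma hockey (c : ℝ) (j m : ℕ) :
    ∑ n ∈ Finset.Ico j (j+m+1),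
        (n.choose j : ℝ) * (ascPochhammer ℝ n).eval c / (n.factorial : ℝ) * (c + j)
      = (ascPochhammer ℝ (j+m+1)).eval c / ((j.factorial : ℝ) * (m.factorial : ℝ)) := by
  induction m with
  | zero =>
    rw [show j + 0 + 1 = j + 1 from rfl, show Finset.Ico j (j+1) = {j} by
      rw [← Nat.Ico_succ_singleton], Finset.sum_singleton, ascPochhammer_succ_right]
    simp only [Polynomial.eval_mul, Polynomial.eval_add, Polynomial.eval_X,
      Polynomial.eval_natCast, Nat.choose_self, Nat.cast_one, Nat.factorial_zero]
    ring
  | succ m ih =>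
    rw [show j + (m+1) + 1 = (j + m + 1) + 1 by ring,
      Finset.sum_Ico_succ_top (by omega : j ≤ j + m + 1), ih]
    simp only [ascPochhammer_succ_right, Polynomial.eval_mul, Polynomial.eval_add,
      Polynomial.eval_X, Polynomial.eval_natCast]
    have h1 : ((j+m+1).factorial : ℝ) ≠ 0 := Nat.cast_ne_zero.mpr (Nat.factorial_ne_zero _)
    have h2 : ((m+1).factorial : ℝ) ≠ 0 := Nat.cast_ne_zero.mpr (Nat.factorial_ne_zero _)
    have h3 : ((m).factorial : ℝ) ≠ 0 := Nat.cast_ne_zero.mpr (Nat.factorial_ne_zero _)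
    have h4 : ((j).factorial : ℝ) ≠ 0 := Nat.cast_ne_zero.mpr (Nat.factorial_ne_zero _)
    have hC : (((j+m+1).choose j : ℕ) : ℝ)
        = ((j+m+1).factorial : ℝ) / ((j.factorial : ℝ) * ((m+1).factorial : ℝ)) := by
      rw [eq_div_iff (by positivity)]
      have := Nat.choose_mul_factorial_mul_factorial (by omega : j ≤ j + m + 1)
      rw [show j + m + 1 - j = m + 1 by omega] at this
      push_cast [← this]
      ring
    have hmfac : ((m+1).factorial : ℝ) = ((m:ℝ)+1) * (m.factorial : ℝ) := by
      rw [Nat.factorial_succ]; push_cast; ring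
    rw [hC, hmfac]
    push_cast
    field_simp
    ring

private lemma gamma_asc (c : ℝ) (hc : 0 < c) (N : ℕ) :
    Real.Gamma (c + N) = (ascPochhammer ℝ N).eval c * Real.Gamma c := by
  induction N with
  | zero => simp
  | succ n ih =>
    have h : c + ((n+1 : ℕ) : ℝ) = (c + n) + 1 := by push_cast; ring
    rw [h, Real.Gamma_add_one (by positivity), ih, ascPochhammer_succ_right]
    simp only [Polynomial.eval_mul, Polynomial.eval_add, Polynomial.eval_X,
      Polynomial.eval_natCast]
    ring

/-- Generic term of the expanded quadruple sum. -/
noncomputable def auxF (α θ x y : ℝ) (j r i n : ℕ) : ℝ :=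
  (-1:ℝ)^(i+j) * (x^θ)^j / Real.Gamma (θ*(j:ℝ)+α+1) * (y^r / (r.factorial:ℝ))
    * (r.choose i : ℝ) * (n.choose j : ℝ)
    * (ascPochhammer ℝ n).eval (((i:ℝ)+α+1)/θ) / (n.factorial : ℝ)

/-- Generic term of the closed-form triple sum. -/
noncomputable def auxE (α θ x y : ℝ) (N : ℕ) (j r i : ℕ) : ℝ :=
  (-1:ℝ)^(i+j) * (x^θ)^j / Real.Gamma (θ*(j:ℝ)+α+1) * (y^r / (r.factorial:ℝ))
    * (r.choose i : ℝ) * (ascPochhammer ℝ N).eval (((i:ℝ)+α+1)/θ)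
    / ((j.factorial:ℝ) * ((N-1-j).factorial:ℝ) * (((i:ℝ)+α+1)/θ + (j:ℝ)))

private lemma rhs_eq (α θ x y : ℝ) (N : ℕ) :
    ∑ n ∈ Finset.range N, konhauserZ α θ n (x ^ θ) * konhauserY α θ n y
    = ∑ n ∈ Finset.range N, ∑ r ∈ Finset.range (n+1), ∑ i ∈ Finset.range (r+1),
        ∑ j ∈ Finset.range (n+1), auxF α θ x y j r i n := by
  refine Finset.sum_congr rfl fun n _ => ?_
  simp only [konhauserZ, konhauserY, Finset.mul_sum, Finset.sum_mul]
  refine Finset.sum_congr rfl fun j _ => ?_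
  refine Finset.sum_congr rfl fun r _ => ?_
  refine Finset.sum_congr rfl fun i _ => ?_
  rw [auxF, pow_add]
  ring

private lemma mid_eq (θ α : ℝ) (hθ : 0 < θ) (hα : -1 < α) (N : ℕ) (x y : ℝ) :
    ∑ n ∈ Finset.range N, ∑ r ∈ Finset.range (n+1), ∑ i ∈ Finset.range (r+1),
        ∑ j ∈ Finset.range (n+1), auxF α θ x y j r i n
    = ∑ j ∈ Finset.range N, ∑ r ∈ Finset.range N, ∑ i ∈ Finset.range (r+1),
        auxE α θ x y N j r i := by
  have step1 : ∑ n ∈ Finset.range N, ∑ r ∈ Finset.range (n+1), ∑ i ∈ Finset.range (r+1),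
        ∑ j ∈ Finset.range (n+1), auxF α θ x y j r i n
      = ∑ n ∈ Finset.range N, ∑ j ∈ Finset.range (n+1), ∑ r ∈ Finset.range (n+1),
        ∑ i ∈ Finset.range (r+1), auxF α θ x y j r i n := by
    refine Finset.sum_congr rfl fun n _ => ?_
    rw [show (∑ r ∈ Finset.range (n+1), ∑ i ∈ Finset.range (r+1),
        ∑ j ∈ Finset.range (n+1), auxF α θ x y j r i n)
      = ∑ r ∈ Finset.range (n+1), ∑ j ∈ Finset.range (n+1),
        ∑ i ∈ Finset.range (r+1), auxF α θ x y j r i n from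
      Finset.sum_congr rfl fun r _ => Finset.sum_comm]
    exact Finset.sum_comm
  rw [step1]
  have step2 : ∑ n ∈ Finset.range N, ∑ j ∈ Finset.range (n+1), ∑ r ∈ Finset.range (n+1),
        ∑ i ∈ Finset.range (r+1), auxF α θ x y j r i n
      = ∑ j ∈ Finset.range N, ∑ n ∈ Finset.Ico j N, ∑ r ∈ Finset.range (n+1),
        ∑ i ∈ Finset.range (r+1), auxF α θ x y j r i n :=
    Finset.sum_comm' fun n j => by
      simp only [Finset.mem_range, Finset.mem_Ico]; omega
  rw [step2]
  refine Finset.sum_congr rfl fun j hj => ?_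
  rw [Finset.mem_range] at hj
  have step3 : ∑ n ∈ Finset.Ico j N, ∑ r ∈ Finset.range (n+1),
        ∑ i ∈ Finset.range (r+1), auxF α θ x y j r i n
      = ∑ r ∈ Finset.range N, ∑ n ∈ Finset.Ico (max j r) N,
        ∑ i ∈ Finset.range (r+1), auxF α θ x y j r i n :=
    Finset.sum_comm' fun n r => by
      simp only [Finset.mem_range, Finset.mem_Ico, max_le_iff]; omega
  rw [step3]
  refine Finset.sum_congr rfl fun r hr => ?_
  rw [Finset.mem_range] at hr
  have hzero : ∑ n ∈ Finset.Ico j (max j r), ∑ i ∈ Finset.range (r+1),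
      auxF α θ x y j r i n = 0 := by
    refine Finset.sum_eq_zero fun n hn => ?_
    rw [Finset.mem_Ico] at hn
    have hnr : n < r := by
      rcases lt_max_iff.mp hn.2 with h | h
      · omega
      · exact h
    set q : Polynomial ℝ := (ascPochhammer ℝ n).comp (C θ⁻¹ * (X + C (α+1))) with hqdef
    have hdeg : q.natDegree = n := by
      rw [hqdef, natDegree_comp, ascPochhammer_natDegree,
        natDegree_C_mul (inv_ne_zero hθ.ne'), natDegree_X_add_C, mul_one]
    have heval : ∀ i : ℕ, q.eval (i:ℝ) = (ascPochhammer ℝ n).eval (((i:ℝ)+α+1)/θ) := by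
      intro i
      rw [hqdef, eval_comp]
      congr 1
      simp only [eval_mul, eval_add, eval_C, eval_X]
      ring
    have halt := alt_sum_poly r q (by omega)
    have hfac : ∑ i ∈ Finset.range (r+1), auxF α θ x y j r i n
        = ((-1:ℝ)^j * (x^θ)^j / Real.Gamma (θ*(j:ℝ)+α+1) * (y^r / (r.factorial:ℝ))
            * (n.choose j : ℝ) / (n.factorial : ℝ))
          * ∑ i ∈ Finset.range (r+1), (-1:ℝ)^i * (r.choose i : ℝ) * q.eval (i:ℝ) := by
      rw [Finset.mul_sum]
      refine Finset.sum_congr rfl fun i _ => ?_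
      rw [auxF, heval i, pow_add]
      ring
    rw [hfac, halt, mul_zero]
  have hmaxN : max j r ≤ N := max_le hj.le hr.le
  have hsplit := Finset.sum_Ico_consecutive
    (f := fun n => ∑ i ∈ Finset.range (r+1), auxF α θ x y j r i n)
    (le_max_left j r) hmaxN
  have step4 : ∑ n ∈ Finset.Ico (max j r) N, ∑ i ∈ Finset.range (r+1), auxF α θ x y j r i n
      = ∑ n ∈ Finset.Ico j N, ∑ i ∈ Finset.range (r+1), auxF α θ x y j r i n := by
    rw [← hsplit, hzero, zero_add]
  rw [step4, Finset.sum_comm]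
  refine Finset.sum_congr rfl fun i hi => ?_
  rw [Finset.mem_range] at hi
  set c : ℝ := ((i:ℝ)+α+1)/θ with hcdef
  have hc : 0 < c := by
    rw [hcdef]
    have : (0:ℝ) ≤ (i:ℝ) := Nat.cast_nonneg i
    have hpos : (0:ℝ) < (i:ℝ) + α + 1 := by linarith
    positivity
  have hcj : c + (j:ℝ) ≠ 0 := by positivity
  have hk := hockey c j (N-1-j)
  rw [show j + (N-1-j) + 1 = N by omega] at hk
  have h5 : ∑ n ∈ Finset.Ico j N,
      (n.choose j : ℝ) * (ascPochhammer ℝ n).eval c / (n.factorial : ℝ)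
      = (ascPochhammer ℝ N).eval c
        / ((j.factorial : ℝ) * ((N-1-j).factorial : ℝ)) / (c + j) := by
    rw [eq_div_iff hcj, Finset.sum_mul]
    exact hk
  have h6 : ∑ n ∈ Finset.Ico j N, auxF α θ x y j r i n
      = ((-1:ℝ)^(i+j) * (x^θ)^j / Real.Gamma (θ*(j:ℝ)+α+1) * (y^r / (r.factorial:ℝ))
          * (r.choose i : ℝ))
        * ∑ n ∈ Finset.Ico j N,
            (n.choose j : ℝ) * (ascPochhammer ℝ n).eval c / (n.factorial : ℝ) := by
    rw [Finset.mul_sum]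
    refine Finset.sum_congr rfl fun n _ => ?_
    rw [auxF]
    ring
  rw [h6, h5, auxE, ← hcdef]
  simp only [← div_div]
  ring

private lemma lhs_eq (θ α : ℝ) (hθ : 0 < θ) (hα : -1 < α) (N : ℕ) (hN : 1 ≤ N)
    (x y : ℝ) (hx : 0 < x) :
    KLag α θ N x y
      = ∑ j ∈ Finset.range N, ∑ r ∈ Finset.range N, ∑ i ∈ Finset.range (r+1),
          auxE α θ x y N j r i := by
  rw [KLag, Finset.mul_sum]
  refine Finset.sum_congr rfl fun j hj => ?_
  rw [Finset.mem_range] at hj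
  simp only [Finset.mul_sum]
  have swap : ∑ i ∈ Finset.range N, ∑ r ∈ Finset.Icc i (N-1),
      (θ * ((Real.Gamma ((N : ℝ) + ((i : ℝ) + α + 1) / θ) /
        (Real.Gamma (α + θ * (j : ℝ) + 1) * Real.Gamma (((i : ℝ) + α + 1) / θ))) *
      ((-1) ^ (i + j) /
        ((Nat.factorial j : ℝ) * (Nat.factorial (N - 1 - j) : ℝ) *
          (Nat.factorial i : ℝ) * (Nat.factorial (r - i) : ℝ))) *
      (x ^ (θ * (j : ℝ)) * y ^ r / (α + θ * (j : ℝ) + (i : ℝ) + 1))))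
      = ∑ r ∈ Finset.range N, ∑ i ∈ Finset.range (r+1),
      (θ * ((Real.Gamma ((N : ℝ) + ((i : ℝ) + α + 1) / θ) /
        (Real.Gamma (α + θ * (j : ℝ) + 1) * Real.Gamma (((i : ℝ) + α + 1) / θ))) *
      ((-1) ^ (i + j) /
        ((Nat.factorial j : ℝ) * (Nat.factorial (N - 1 - j) : ℝ) *
          (Nat.factorial i : ℝ) * (Nat.factorial (r - i) : ℝ))) *
      (x ^ (θ * (j : ℝ)) * y ^ r / (α + θ * (j : ℝ) + (i : ℝ) + 1)))) :=
    Finset.sum_comm' fun i r => by simp only [Finset.mem_range, Finset.mem_Icc]; omega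
  rw [swap]
  refine Finset.sum_congr rfl fun r hr => ?_
  rw [Finset.mem_range] at hr
  refine Finset.sum_congr rfl fun i hi => ?_
  rw [Finset.mem_range] at hi
  have hipos : (0:ℝ) < (i:ℝ) + α + 1 := by
    have : (0:ℝ) ≤ (i:ℝ) := Nat.cast_nonneg i
    linarith
  have hc : 0 < ((i:ℝ)+α+1)/θ := by positivity
  have hG : Real.Gamma ((N:ℝ) + ((i:ℝ)+α+1)/θ)
      = (ascPochhammer ℝ N).eval (((i:ℝ)+α+1)/θ) * Real.Gamma (((i:ℝ)+α+1)/θ) := by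
    rw [show (N:ℝ) + ((i:ℝ)+α+1)/θ = ((i:ℝ)+α+1)/θ + (N:ℕ) by push_cast; ring]
    exact gamma_asc _ hc N
  have hx1 : x ^ (θ*(j:ℝ)) = (x^θ)^j := by
    rw [Real.rpow_mul hx.le, Real.rpow_natCast]
  have hch : ((r.choose i : ℕ) : ℝ)
      = (r.factorial:ℝ)/((i.factorial:ℝ)*((r-i).factorial:ℝ)) := by
    rw [eq_div_iff (by positivity), ← mul_assoc]
    exact_mod_cast Nat.choose_mul_factorial_mul_factorial (by omega : i ≤ r)
  have hA : α + θ*(j:ℝ) + (i:ℝ) + 1 = θ * (((i:ℝ)+α+1)/θ + (j:ℝ)) := by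
    field_simp
    ring
  have hΓc : Real.Gamma (((i:ℝ)+α+1)/θ) ≠ 0 := (Real.Gamma_pos_of_pos hc).ne'
  have hΓ1 : Real.Gamma (θ*(j:ℝ)+α+1) ≠ 0 := by
    have h1 : (0:ℝ) ≤ θ*(j:ℝ) := mul_nonneg hθ.le (Nat.cast_nonneg j)
    exact (Real.Gamma_pos_of_pos (by linarith)).ne'
  have hjf : ((j.factorial : ℕ) : ℝ) ≠ 0 := Nat.cast_ne_zero.mpr (Nat.factorial_ne_zero _)
  have hmf : (((N-1-j).factorial : ℕ) : ℝ) ≠ 0 := Nat.cast_ne_zero.mpr (Nat.factorial_ne_zero _)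
  have hif : ((i.factorial : ℕ) : ℝ) ≠ 0 := Nat.cast_ne_zero.mpr (Nat.factorial_ne_zero _)
  have hrif : (((r-i).factorial : ℕ) : ℝ) ≠ 0 := Nat.cast_ne_zero.mpr (Nat.factorial_ne_zero _)
  have hrf : ((r.factorial : ℕ) : ℝ) ≠ 0 := Nat.cast_ne_zero.mpr (Nat.factorial_ne_zero _)
  have hcj : ((i:ℝ)+α+1)/θ + (j:ℝ) ≠ 0 := by positivity
  rw [auxE, hG, hx1, hch, hA, show α + θ*(j:ℝ) + 1 = θ*(j:ℝ)+α+1 by ring]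
  field_simp

end Aux

/-- **The Laguerre Christoffel–Darboux kernel as a sum over Konhauser
biorthogonal Laguerre polynomials:** `K_N^{Lag}(x,y) = ∑_{i<N} Z_i^α(x^θ) Y_i^α(y)`. -/
theorem KLag_eq_sum_konhauser (θ α : ℝ) (hθ : 0 < θ) (hα : -1 < α)
    (N : ℕ) (hN : 1 ≤ N) (x y : ℝ) (hx : 0 < x) (hy : 0 < y) :
    KLag α θ N x y =
      ∑ i ∈ Finset.range N, konhauserZ α θ i (x ^ θ) * konhauserY α θ i y := by
  rw [lhs_eq θ α hθ hα N hN x y hx, ← mid_eq θ α hθ hα N x y, rhs_eq α θ x y N]
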